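/- Order {+,-,i,-i} by + < i, − < −i, − < i, + < −i (with +,− incomparable and i,−i incomparable), extended componentwise to {+,-,i,-i}^n. Then the bijection f from the Salvetti poset to nowhere-zero complex sign vectors (defined by (F^C)_j = F_j if F_j ≠ 0, i if F_j = 0, C_j = +, and −i if F_j = 0, C_j = −) is an order isomorphism, where the Salvetti poset order is (F',C') ≤ (F,C) iff F ≤ F' and F' ∘ C = C'. -/
import Mathlib


inductive CSign : Type
  | plus : CSign
  | minus : CSign
  | im : CSign
  | negim : CSign
deriving DecidableEq

def toCSign {n : ℕ} (F C : Fin n → SignType) : Fin n → CSign :=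
  fun j =>
    match F j with
    | SignType.pos => CSign.plus
    | SignType.neg => CSign.minus
    | SignType.zero => if C j = SignType.pos then CSign.im else CSign.negim

/-- The order on `{+, -, i, -i}`: `+ < i`, `- < -i`, `- < i`, `+ < -i`. -/
def csLE : CSign → CSign → Prop :=
  fun a b => a = b ∨
    ((a = CSign.plus ∨ a = CSign.minus) ∧ (b = CSign.im ∨ b = CSign.negim))

def svComp {n : ℕ} (X Y : Fin n → SignType) : Fin n → SignType :=
  fun i => if X i = 0 then Y i else X i

def svLE {n : ℕ} (X Y : Fin n → SignType) : Prop := ∀ i, X i = 0 ∨ X i = Y i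

/-- The Salvetti order: `(F', C') ≤ (F, C)` iff `F ≤ F'` and `F' ∘ C = C'`. -/
def salLE {n : ℕ} (p q : (Fin n → SignType) × (Fin n → SignType)) : Prop :=
  svLE q.1 p.1 ∧ svComp p.1 q.2 = p.2

def SalPair (n : ℕ) : Type :=
  {p : (Fin n → SignType) × (Fin n → SignType) //
    (∀ j, p.2 j ≠ 0) ∧ (∀ j, p.1 j = 0 ∨ p.1 j = p.2 j)}

def t1 (a c : SignType) : CSign :=
  match a with
  | SignType.pos => CSign.plus
  | SignType.neg => CSign.minus
  | SignType.zero => if c = SignType.pos then CSign.im else CSign.negim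

lemma toCSign_eq {n : ℕ} (F C : Fin n → SignType) (j : Fin n) :
    toCSign F C j = t1 (F j) (C j) := rfl

def backF : CSign → SignType
  | CSign.plus => 1
  | CSign.minus => -1
  | _ => 0

def backC : CSign → SignType
  | CSign.plus => 1
  | CSign.minus => -1
  | CSign.im => 1
  | CSign.negim => -1

instance : Fintype CSign :=
  ⟨{CSign.plus, CSign.minus, CSign.im, CSign.negim}, by intro x; cases x <;> decide⟩

instance (a b : CSign) : Decidable (csLE a b) := by unfold csLE; infer_instance

lemma t1_inj : ∀ a b c d : SignType, c ≠ 0 → d ≠ 0 →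
    (a = 0 ∨ a = c) → (b = 0 ∨ b = d) → t1 a c = t1 b d → a = b ∧ c = d := by decide

lemma t1_back : ∀ x : CSign, backC x ≠ 0 ∧ (backF x = 0 ∨ backF x = backC x) ∧
    t1 (backF x) (backC x) = x := by decide

lemma key' : ∀ a b c d : SignType, (c ≠ 0 ∧ d ≠ 0 ∧ (a = 0 ∨ a = c) ∧ (b = 0 ∨ b = d)) →
    (((b = 0 ∨ b = a) ∧ (if a = 0 then d else a) = c) ↔ csLE (t1 a c) (t1 b d)) := by decide

lemma key (a b c d : SignType) (h1 : c ≠ 0) (h2 : d ≠ 0)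
    (h3 : a = 0 ∨ a = c) (h4 : b = 0 ∨ b = d) :
    (((b = 0 ∨ b = a) ∧ (if a = 0 then d else a) = c) ↔ csLE (t1 a c) (t1 b d)) :=
  key' a b c d ⟨h1, h2, h3, h4⟩

/-- `(F,C) ↦ F^C` is an order isomorphism from the Salvetti poset onto the poset of
nowhere-zero complex sign vectors. -/
theorem toCSign_orderIso {n : ℕ} :
    Function.Bijective (fun p : SalPair n => toCSign p.1.1 p.1.2) ∧
    ∀ p q : SalPair n,
      salLE p.1 q.1 ↔ ∀ j, csLE (toCSign p.1.1 p.1.2 j) (toCSign q.1.1 q.1.2 j) := by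
  refine ⟨⟨?_, ?_⟩, ?_⟩
  · rintro ⟨⟨F, C⟩, hC, hFC⟩ ⟨⟨F', C'⟩, hC', hFC'⟩ h
    have h' : ∀ j, t1 (F j) (C j) = t1 (F' j) (C' j) := fun j => congrFun h j
    have e1 : F = F' := funext fun j =>
      (t1_inj _ _ _ _ (hC j) (hC' j) (hFC j) (hFC' j) (h' j)).1
    have e2 : C = C' := funext fun j =>
      (t1_inj _ _ _ _ (hC j) (hC' j) (hFC j) (hFC' j) (h' j)).2
    subst e1; subst e2; rfl
  · intro X
    refine ⟨⟨⟨fun j => backF (X j), fun j => backC (X j)⟩,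
      fun j => (t1_back (X j)).1, fun j => (t1_back (X j)).2.1⟩, ?_⟩
    funext j
    exact (t1_back (X j)).2.2
  · rintro ⟨⟨F, C⟩, hC, hFC⟩ ⟨⟨F', C'⟩, hC', hFC'⟩
    simp only [toCSign_eq, salLE, svLE, svComp, funext_iff]
    constructor
    · rintro ⟨h1, h2⟩ j
      exact (key (F j) (F' j) (C j) (C' j) (hC j) (hC' j) (hFC j) (hFC' j)).1 ⟨h1 j, h2 j⟩
    · intro h
      constructor <;> intro j <;>
        [exact ((key (F j) (F' j) (C j) (C' j) (hC j) (hC' j) (hFC j) (hFC' j)).2 (h j)).1;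
         exact ((key (F j) (F' j) (C j) (C' j) (hC j) (hC' j) (hFC j) (hFC' j)).2 (h j)).2]
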